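/- arXiv:1205.5309 — 6 statements merged into one kernel-verified Lean document; each statement's English description precedes it below -/
import Mathlib

section
/- Suppose that the holomorphic function of one complex variable b ↦ ρ(0, b, 0) is not identically zero on any neighborhood of 0 in ℂ. Then 0 is an isolated point of the fiber F⁻¹(0): there is a neighborhood U of 0 in ℂⁿ such that every t ∈ U with F(t) = 0 satisfies t = 0. (This is the implication (ii) ⇒ (i) of Proposition 3.1: the parametrization of M extends to a finite holomorphic map.) -/
/-!
On the fiber `F t = 0` we have `t₁ + i tₙ = 0`, and with `b = t₁ - i tₙ` the remaining equations
read `t' = -i r(0, b, t')` and `ρ(0, b, t') = 0`. Since `r(0, b, 0) = 0` and `r = o(‖x‖)` at `0`,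
for every small `b` the Schwarz lemma makes `t' ↦ r(0, b, t')` a contraction by `1/2` on a fixed
ball, so `t' = 0`. Then `ρ(0, b, 0) = 0`, and the isolated zeros of the holomorphic function
`ρ(0, ·, 0)`, which does not vanish identically, force `b = 0`, hence `t = 0`.
-/

open Complex Filter Topology Metric Set

section

variable {X Y E F : Type*} [NormedAddCommGroup X] [NormedSpace ℂ X] [NormedAddCommGroup Y]
  [NormedSpace ℂ Y] [NormedAddCommGroup E] [NormedSpace ℂ E] [NormedAddCommGroup F]
  [NormedSpace ℂ F]

theorem Filter.Eventually.differentiableAt_comp_continuousLinearMap {f : X → F}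
    (hf : ∀ᶠ x in 𝓝 0, DifferentiableAt ℂ f x) (L : Y →L[ℂ] X) :
    ∀ᶠ y in 𝓝 0, DifferentiableAt ℂ (f ∘ L) y :=
  ((L.continuous.tendsto' 0 0 L.map_zero).eventually hf).mono fun y hy =>
    hy.comp y L.differentiableAt

theorem eq_zero_of_norm_le_norm_apply_of_mapsTo_ball {g : E → F} {R c : ℝ} (hc : c < 1)
    (hd : DifferentiableOn ℂ g (ball 0 R)) (hg0 : g 0 = 0)
    (hmaps : MapsTo g (ball 0 R) (closedBall 0 (c * R))) {w : E} (hw : w ∈ ball 0 R)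
    (hle : ‖w‖ ≤ ‖g w‖) : w = 0 := by
  have hR : 0 < R := pos_of_mem_ball hw
  have hschwarz := Complex.dist_le_div_mul_dist_of_mapsTo_ball hd (by rwa [hg0]) hw
  rw [hg0, dist_zero_right, dist_zero_right, mul_div_cancel_right₀ c hR.ne'] at hschwarz
  exact norm_le_zero_iff.mp (by nlinarith [norm_nonneg w])

theorem eventually_snd_eq_zero_of_norm_snd_le_norm_apply {g : X × E → F}
    (hd : ∀ᶠ p in 𝓝 0, DifferentiableAt ℂ g p) (hg' : HasFDerivAt g (0 : X × E →L[ℂ] F) 0)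
    (hg0 : ∀ᶠ x in 𝓝 0, g (x, 0) = 0) :
    ∀ᶠ p in 𝓝 (0 : X × E), ‖p.2‖ ≤ ‖g p‖ → p.2 = 0 := by
  have hsmall : ∀ᶠ p in 𝓝 0, ‖g p‖ ≤ 2⁻¹ * ‖p‖ := by
    have := (hasFDerivAt_iff_isLittleO_nhds_zero.mp hg').bound (c := 2⁻¹) (by norm_num)
    simpa [show g 0 = 0 from hg0.self_of_nhds] using this
  obtain ⟨δ, hδ, hball⟩ := eventually_nhds_iff_ball.mp (hd.and hsmall)
  obtain ⟨δ', hδ', hball'⟩ := eventually_nhds_iff_ball.mp hg0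
  filter_upwards [ball_mem_nhds 0 (lt_min hδ hδ')] with ⟨x, w⟩ hp hle
  simp only [mem_ball_zero_iff, Prod.norm_mk, max_lt_iff, lt_min_iff] at hp
  have hslice : MapsTo (fun v : E => (x, v)) (ball 0 δ) (ball 0 δ) := fun v hv => by
    simpa [hp.1.1] using hv
  refine eq_zero_of_norm_le_norm_apply_of_mapsTo_ball (g := fun v => g (x, v)) (R := δ)
    (c := 2⁻¹) (by norm_num) (fun v hv => ?_) (hball' x (by simpa using hp.2.1))
    (fun v hv => ?_) (by simpa using hp.1.2) hle
  · exact ((hball (x, v) (hslice hv)).1.comp v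
      ((differentiableAt_const x).prodMk differentiableAt_id)).differentiableWithinAt
  · have := mem_ball_zero_iff.mp (hslice hv)
    exact mem_closedBall_zero_iff.mpr ((hball (x, v) (hslice hv)).2.trans (by linarith))

theorem eventually_eq_of_apply_eq_zero [CompleteSpace E] {q : ℂ → E} {z₀ : ℂ}
    (hd : ∀ᶠ z in 𝓝 z₀, DifferentiableAt ℂ q z) (hnz : ¬ ∀ᶠ z in 𝓝 z₀, q z = 0) :
    ∀ᶠ z in 𝓝 z₀, q z = 0 → z = z₀ := by
  have ha : AnalyticAt ℂ q z₀ :=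
    DifferentiableOn.analyticAt (fun _ hz => DifferentiableAt.differentiableWithinAt hz) hd
  have hne := eventually_nhdsWithin_iff.mp
    (ha.eventually_eq_zero_or_eventually_ne_zero.resolve_left hnz)
  filter_upwards [hne] with z hz hqz
  by_contra h
  exact hz h hqz

end

theorem stmt0_general (n : ℕ)
    (ρ : ℂ × ℂ × (Fin (n - 2) → ℂ) → ℂ)
    (r : ℂ × ℂ × (Fin (n - 2) → ℂ) → (Fin (n - 2) → ℂ))
    (hρ : ∀ᶠ x in 𝓝 (0 : ℂ × ℂ × (Fin (n - 2) → ℂ)), DifferentiableAt ℂ ρ x)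
    (hr : ∀ᶠ x in 𝓝 (0 : ℂ × ℂ × (Fin (n - 2) → ℂ)), DifferentiableAt ℂ r x)
    (hdr0 : fderiv ℂ r 0 = 0)
    (hrb : ∀ᶠ b in 𝓝 (0 : ℂ), r (0, b, 0) = 0)
    (F : ℂ × (Fin (n - 2) → ℂ) × ℂ → ℂ × (Fin (n - 2) → ℂ) × ℂ)
    (hF : ∀ t : ℂ × (Fin (n - 2) → ℂ) × ℂ,
      F t = (t.1 + I * t.2.2,
             t.2.1 + I • r (t.1 + I * t.2.2, t.1 - I * t.2.2, t.2.1),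
             ρ (t.1 + I * t.2.2, t.1 - I * t.2.2, t.2.1)))
    (hnz : ¬ ∀ᶠ b in 𝓝 (0 : ℂ), ρ (0, b, 0) = 0) :
    ∃ U ∈ 𝓝 (0 : ℂ × (Fin (n - 2) → ℂ) × ℂ), ∀ t ∈ U, F t = 0 → t = 0 := by
  have hslice : ∀ᶠ p in 𝓝 (0 : ℂ × (Fin (n - 2) → ℂ)), ‖p.2‖ ≤ ‖r (0, p)‖ → p.2 = 0 := by
    have hd := hr.self_of_nhds.hasFDerivAt.comp 0
      (ContinuousLinearMap.inr ℂ ℂ (ℂ × (Fin (n - 2) → ℂ))).hasFDerivAt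
    rw [hdr0, ContinuousLinearMap.zero_comp] at hd
    exact eventually_snd_eq_zero_of_norm_snd_le_norm_apply
      (hr.differentiableAt_comp_continuousLinearMap (ContinuousLinearMap.inr ℂ ℂ _)) hd hrb
  have hzeros : ∀ᶠ b in 𝓝 (0 : ℂ), ρ (0, b, 0) = 0 → b = 0 :=
    eventually_eq_of_apply_eq_zero
      (q := ρ ∘ (ContinuousLinearMap.inr ℂ ℂ _).comp (ContinuousLinearMap.inl ℂ ℂ _))
      (hρ.differentiableAt_comp_continuousLinearMap _) hnz
  have hbw : Tendsto (fun t : ℂ × (Fin (n - 2) → ℂ) × ℂ => (t.1 - I * t.2.2, t.2.1))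
      (𝓝 0) (𝓝 0) :=
    (by fun_prop : Continuous _).tendsto' 0 0 (by simp)
  refine ⟨_, (hbw.eventually hslice).and (hbw.fst_nhds.eventually hzeros), ?_⟩
  rintro ⟨t₁, w, tₙ⟩ ⟨hw, hb⟩ hFt
  simp only [hF, Prod.mk_eq_zero] at hFt
  obtain ⟨ha, hw', hρt⟩ := hFt
  rw [ha] at hw' hρt
  have hw0 : w = 0 :=
    hw ((congrArg norm (eq_neg_of_add_eq_zero_left hw')).trans_le (by simp [norm_smul]))
  have hb0 : t₁ - I * tₙ = 0 := hb (by rwa [hw0] at hρt)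
  have ht₁ : t₁ = 0 := by linear_combination (ha + hb0) / 2
  have htₙ : tₙ = 0 :=
    (mul_eq_zero.mp (by linear_combination (ha - hb0) / 2)).resolve_left I_ne_zero
  simp [ht₁, hw0, htₙ]

/-- Proposition 3.1, (ii) ⇒ (i): if ρ(0, ·, 0) is not identically zero near 0,
then 0 is an isolated point of the fiber F⁻¹(0). -/
theorem stmt0 (n : ℕ) (hn : 2 ≤ n)
    (ρ : ℂ × ℂ × (Fin (n - 2) → ℂ) → ℂ)
    (r : ℂ × ℂ × (Fin (n - 2) → ℂ) → (Fin (n - 2) → ℂ))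
    (hρ : ∀ᶠ x in 𝓝 (0 : ℂ × ℂ × (Fin (n - 2) → ℂ)), DifferentiableAt ℂ ρ x)
    (hr : ∀ᶠ x in 𝓝 (0 : ℂ × ℂ × (Fin (n - 2) → ℂ)), DifferentiableAt ℂ r x)
    (hρ0 : ρ 0 = 0) (hdρ0 : fderiv ℂ ρ 0 = 0)
    (hr0 : r 0 = 0) (hdr0 : fderiv ℂ r 0 = 0)
    (hrb : ∀ᶠ b in 𝓝 (0 : ℂ), r (0, b, 0) = 0)
    (F : ℂ × (Fin (n - 2) → ℂ) × ℂ → ℂ × (Fin (n - 2) → ℂ) × ℂ)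
    (hF : ∀ t : ℂ × (Fin (n - 2) → ℂ) × ℂ,
      F t = (t.1 + I * t.2.2,
             t.2.1 + I • r (t.1 + I * t.2.2, t.1 - I * t.2.2, t.2.1),
             ρ (t.1 + I * t.2.2, t.1 - I * t.2.2, t.2.1)))
    (hnz : ¬ ∀ᶠ b in 𝓝 (0 : ℂ), ρ (0, b, 0) = 0) :
    ∃ U ∈ 𝓝 (0 : ℂ × (Fin (n - 2) → ℂ) × ℂ), ∀ t ∈ U, F t = 0 → t = 0 :=
  stmt0_general n ρ r hρ hr hdr0 hrb F hF hnz
end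

section
/- Suppose that ρ(0, b, 0) = 0 for all b in a neighborhood of 0 in ℂ. Then for every sufficiently small s ∈ ℂ the point (−i s, 0, s) ∈ ℂ × ℂ^{n−2} × ℂ satisfies F(−i s, 0, s) = 0. In particular, the fiber F⁻¹(0) contains a germ of a complex line through 0, so 0 is not an isolated point of F⁻¹(0). (This is the implication (i) ⇒ (ii) of Proposition 3.1 in contrapositive form: if ρ(0, z̄₁, 0) ≡ 0 then the extended map F is not finite at 0.) -/
open Complex Filter Topology

/-- Proposition 3.1, (i) ⇒ (ii) in contrapositive form: if ρ(0, ·, 0) ≡ 0 near 0,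
then the fiber F⁻¹(0) contains the germ of a complex line through 0, so 0 is not
an isolated point of F⁻¹(0). -/
theorem stmt1 (n : ℕ) (hn : 2 ≤ n)
    (ρ : ℂ × ℂ × (Fin (n - 2) → ℂ) → ℂ)
    (r : ℂ × ℂ × (Fin (n - 2) → ℂ) → (Fin (n - 2) → ℂ))
    (hρ : ∀ᶠ x in 𝓝 (0 : ℂ × ℂ × (Fin (n - 2) → ℂ)), DifferentiableAt ℂ ρ x)
    (hr : ∀ᶠ x in 𝓝 (0 : ℂ × ℂ × (Fin (n - 2) → ℂ)), DifferentiableAt ℂ r x)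
    (hρ0 : ρ 0 = 0) (hdρ0 : fderiv ℂ ρ 0 = 0)
    (hr0 : r 0 = 0) (hdr0 : fderiv ℂ r 0 = 0)
    (hrb : ∀ᶠ b in 𝓝 (0 : ℂ), r (0, b, 0) = 0)
    (F : ℂ × (Fin (n - 2) → ℂ) × ℂ → ℂ × (Fin (n - 2) → ℂ) × ℂ)
    (hF : ∀ t : ℂ × (Fin (n - 2) → ℂ) × ℂ,
      F t = (t.1 + I * t.2.2,
             t.2.1 + I • r (t.1 + I * t.2.2, t.1 - I * t.2.2, t.2.1),
             ρ (t.1 + I * t.2.2, t.1 - I * t.2.2, t.2.1)))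
    (hz : ∀ᶠ b in 𝓝 (0 : ℂ), ρ (0, b, 0) = 0) :
    (∀ᶠ s in 𝓝 (0 : ℂ), F (-(I * s), 0, s) = 0) ∧
    (∀ U ∈ 𝓝 (0 : ℂ × (Fin (n - 2) → ℂ) × ℂ), ∃ t ∈ U, F t = 0 ∧ t ≠ 0) := by
  have key : ∀ᶠ s in 𝓝 (0 : ℂ), F (-(I * s), 0, s) = 0 := by
    have hcont : Continuous (fun s : ℂ => -(2 * I * s)) := by continuity
    have h1 : ∀ᶠ s in 𝓝 (0 : ℂ), r (0, -(2 * I * s), 0) = 0 := by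
      have := ((by simpa using hcont.tendsto 0 : Filter.Tendsto (fun s : ℂ => -(2 * I * s)) (𝓝 0) (𝓝 0))).eventually hrb
      simpa using this
    have h2 : ∀ᶠ s in 𝓝 (0 : ℂ), ρ (0, -(2 * I * s), 0) = 0 := by
      have := ((by simpa using hcont.tendsto 0 : Filter.Tendsto (fun s : ℂ => -(2 * I * s)) (𝓝 0) (𝓝 0))).eventually hz
      simpa using this
    filter_upwards [h1, h2] with s h1 h2
    rw [hF]
    have e1 : -(I * s) + I * s = 0 := by ring
    have e2 : -(I * s) - I * s = -(2 * I * s) := by ring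
    simp only [e1, e2]
    simp [h1, h2, Prod.ext_iff]
  refine ⟨key, fun U hU => ?_⟩
  have hcont : Continuous (fun s : ℂ => ((-(I * s), 0, s) : ℂ × (Fin (n - 2) → ℂ) × ℂ)) := by
    continuity
  have hU' : ∀ᶠ s in 𝓝 (0 : ℂ), ((-(I * s), 0, s) : ℂ × (Fin (n - 2) → ℂ) × ℂ) ∈ U := by
    have := hcont.tendsto 0
    simp only [mul_zero, neg_zero] at this
    exact this hU
  have hne : ∀ᶠ s in 𝓝[≠] (0 : ℂ), True := by simp
  obtain ⟨s, hsU, hsF, hs0⟩ : ∃ s : ℂ, ((-(I * s), 0, s) : ℂ × (Fin (n - 2) → ℂ) × ℂ) ∈ U ∧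
      F (-(I * s), 0, s) = 0 ∧ s ≠ 0 := by
    have h := (hU'.and key).filter_mono (nhdsWithin_le_nhds (s := {(0:ℂ)}ᶜ))
    have h2 := h.and (self_mem_nhdsWithin (s := {(0:ℂ)}ᶜ) (a := (0:ℂ)))
    obtain ⟨s, ⟨h1, h2'⟩, h3⟩ := h2.exists
    exact ⟨s, h1, h2', h3⟩
  exact ⟨(-(I * s), 0, s), hsU, hsF, fun h => hs0 (by simpa using congrArg (fun t => t.2.2) h)⟩
end

section
/- The origin 0 is an isolated point of the fiber F⁻¹(0) (i.e., there is a neighborhood U of 0 in ℂ² such that every t ∈ U with F(t) = 0 equals 0) if and only if the holomorphic function of one variable χ ↦ ρ(0, χ) is not identically zero on any neighborhood of 0 in ℂ. (This is the equivalence (i) ⟺ (ii) of Theorem 3.3 for CR singular surfaces in ℂ²: M is the image of a totally real surface under a finite holomorphic map exactly when ρ(0, z̄) ≢ 0.) -/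
open Complex Filter Topology

/-- Also holds when `f x ≠ 0`, i.e. when `x` is not in the zero set at all. -/
def IsolatedInZeroSet {X M : Type*} [TopologicalSpace X] [Zero M] (f : X → M) (x : X) : Prop :=
  ∃ U ∈ 𝓝 x, ∀ y ∈ U, f y = 0 → y = x

theorem isolatedInZeroSet_iff_eventually_ne {X M : Type*} [TopologicalSpace X] [Zero M]
    {f : X → M} {x : X} : IsolatedInZeroSet f x ↔ ∀ᶠ y in 𝓝[≠] x, f y ≠ 0 := by
  rw [eventually_nhdsWithin_iff, eventually_iff_exists_mem]
  refine exists_congr fun U => and_congr_right fun _ => forall₂_congr fun y _ => ?_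
  exact not_imp_not.symm

theorem AnalyticAt.isolatedInZeroSet_iff {𝕜 E : Type*} [NontriviallyNormedField 𝕜]
    [NormedAddCommGroup E] [NormedSpace 𝕜 E] {f : 𝕜 → E} {z : 𝕜} (hf : AnalyticAt 𝕜 f z) :
    IsolatedInZeroSet f z ↔ ¬ ∀ᶠ w in 𝓝 z, f w = 0 := by
  rw [isolatedInZeroSet_iff_eventually_ne, ← hf.frequently_zero_iff_eventually_zero,
    not_frequently]

theorem analyticAt_comp_prodMk_of_eventually_differentiableAt {E F : Type*}
    [NormedAddCommGroup E] [NormedSpace ℂ E] [NormedAddCommGroup F] [NormedSpace ℂ F]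
    [CompleteSpace F] {ρ : E × ℂ → F} {a : E} {b : ℂ}
    (hρ : ∀ᶠ x in 𝓝 (a, b), DifferentiableAt ℂ ρ x) : AnalyticAt ℂ (fun χ => ρ (a, χ)) b := by
  have hslice : Tendsto (fun χ : ℂ => (a, χ)) (𝓝 b) (𝓝 (a, b)) :=
    (Continuous.prodMk_right a).tendsto b
  rw [analyticAt_iff_eventually_differentiableAt]
  filter_upwards [hslice.eventually hρ] with χ hχ
  exact hχ.comp χ ((differentiableAt_const a).prodMk differentiableAt_id)

/-- In the coordinates `z = t₁ + i t₂`, `χ = t₁ - i t₂` the fiber `F⁻¹(0)` is `{0} × ρ(0, ·)⁻¹(0)`;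
the line `χ ↦ (χ / 2, i χ / 2)` is the axis `z = 0`. -/
theorem isolatedInZeroSet_zero_iff_slice (ρ : ℂ × ℂ → ℂ) {F : ℂ × ℂ → ℂ × ℂ}
    (hF : ∀ t : ℂ × ℂ, F t = (t.1 + I * t.2, ρ (t.1 + I * t.2, t.1 - I * t.2))) :
    IsolatedInZeroSet F 0 ↔ IsolatedInZeroSet (fun χ => ρ (0, χ)) 0 := by
  constructor
  · rintro ⟨U, hU, hUF⟩
    have haxis : Continuous fun χ : ℂ => ((χ / 2, I * χ / 2) : ℂ × ℂ) := by fun_prop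
    have hU' : U ∈ 𝓝 ((0 : ℂ) / 2, I * 0 / 2) := by simpa [Prod.mk_zero_zero] using hU
    refine ⟨_, haxis.continuousAt.preimage_mem_nhds hU', fun χ hχ hρχ => ?_⟩
    have hFχ : F (χ / 2, I * χ / 2) = 0 := by
      have hz : χ / 2 + I * (I * χ / 2) = 0 := by linear_combination χ / 2 * I_sq
      have hw : χ / 2 - I * (I * χ / 2) = χ := by linear_combination -χ / 2 * I_sq
      rw [hF, hz, hw]
      exact Prod.ext rfl hρχ
    simpa using congrArg Prod.fst (hUF _ hχ hFχ)
  · rintro ⟨W, hW, hWρ⟩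
    have hw : Continuous fun t : ℂ × ℂ => t.1 - I * t.2 := by fun_prop
    refine ⟨_, hw.continuousAt.preimage_mem_nhds (by simpa using hW), fun t ht hFt => ?_⟩
    rw [hF, Prod.mk_eq_zero] at hFt
    obtain ⟨hz, hρt⟩ := hFt
    rw [hz] at hρt
    have hχ : t.1 - I * t.2 = 0 := hWρ _ ht hρt
    have ht₁ : t.1 = 0 := by linear_combination (hz + hχ) / 2
    have ht₂ : t.2 = 0 := by linear_combination (I * hχ - I * hz) / 2 + t.2 * I_sq
    exact Prod.ext ht₁ ht₂

theorem stmt3_general (ρ : ℂ × ℂ → ℂ)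
    (hρ : ∀ᶠ x in 𝓝 (0 : ℂ × ℂ), DifferentiableAt ℂ ρ x)
    (F : ℂ × ℂ → ℂ × ℂ)
    (hF : ∀ t : ℂ × ℂ, F t = (t.1 + I * t.2, ρ (t.1 + I * t.2, t.1 - I * t.2))) :
    (∃ U ∈ 𝓝 (0 : ℂ × ℂ), ∀ t ∈ U, F t = 0 → t = 0) ↔
      ¬ ∀ᶠ χ in 𝓝 (0 : ℂ), ρ (0, χ) = 0 :=
  (isolatedInZeroSet_zero_iff_slice ρ hF).trans
    (analyticAt_comp_prodMk_of_eventually_differentiableAt hρ).isolatedInZeroSet_iff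

/-- Theorem 3.3, equivalence (i) ⟺ (ii): 0 is an isolated point of F⁻¹(0)
if and only if ρ(0, ·) is not identically zero near 0. -/
theorem stmt3 (ρ : ℂ × ℂ → ℂ)
    (hρ : ∀ᶠ x in 𝓝 (0 : ℂ × ℂ), DifferentiableAt ℂ ρ x)
    (hρ0 : ρ 0 = 0) (hdρ0 : fderiv ℂ ρ 0 = 0)
    (F : ℂ × ℂ → ℂ × ℂ)
    (hF : ∀ t : ℂ × ℂ, F t = (t.1 + I * t.2, ρ (t.1 + I * t.2, t.1 - I * t.2))) :
    (∃ U ∈ 𝓝 (0 : ℂ × ℂ), ∀ t ∈ U, F t = 0 → t = 0) ↔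
      ¬ ∀ᶠ χ in 𝓝 (0 : ℂ), ρ (0, χ) = 0 :=
  stmt3_general ρ hρ F hF
end

section
/- Let ρ : ℂ^{n−1} × ℂ^{n−1} → ℂ be holomorphic near 0 with ρ(0) = 0, Dρ(0) = 0, and ρ(0, χ) = 0 for all χ in a neighborhood of 0 in ℂ^{n−1}. Let F = (F', F_n) : ℂ^{n−2} × ℂ² → ℂ^{n−1} × ℂ be holomorphic near 0 with F(0) = 0, and suppose that F_n(ζ, ω) = ρ(F'(ζ, ω), conj(F'(ζ, ω))) for all (ζ, ω) ∈ N sufficiently near 0. Then the identity F_n(ζ, ω) = ρ(F'(ζ, ω), conj(F'(0, ω̄))) holds for all (ζ, ω) in a neighborhood of 0 in ℂⁿ; in particular, F_n(ζ, ω) = 0 at every point near 0 where F'(ζ, ω) = 0. (This is the content of Proposition 2.4: if ρ(0, z̄) ≡ 0 then F_n lies in the ideal generated by the components of F', so F cannot be a finite map.) -/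
/-!
Let `Ψ (ζ, χ, τ) := Fₙ (ζ, r (ζ, χ, τ)) - ρ (F' (ζ, r (ζ, χ, τ)), conj F' (χ̄, τ̄))`, a holomorphic
function of the parameters `(ζ, χ, τ)` of the complexification `ω = r (ζ, χ, τ)` of `N`. The
hypothesis says that `Ψ (ζ, ζ̄, τ) = 0` whenever `(ζ, τ̄) ∈ N`, i.e. `r (ζ, ζ̄, τ) = τ̄`.
The map `straighten r : (ζ, χ, τ) ↦ (ζ, χ, (τ + r (ζ, χ, τ)) / 2)` is tangent to the identity at
`0` by the normality conditions, and by the reality condition it sends these parameters onto the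
totally real set `{(ζ, ζ̄, σ) | σ ∈ ℝ²}`. A holomorphic germ vanishing there vanishes identically
(restrict it to complex lines through real points), so `Ψ = 0` near `0`; putting `χ = 0`, where
`r (ζ, 0, τ) = τ`, gives the identity. The inverse function theorem applies to `straighten r`
because complex differentiable maps are `C¹` by the Cauchy estimates.
-/

open Complex Filter Topology
open Metric Set
open scoped ComplexStarModule

section Regularity

variable {U V W : Type*} [NormedAddCommGroup U] [NormedSpace ℂ U] [NormedAddCommGroup V]
  [NormedSpace ℂ V] [NormedAddCommGroup W] [NormedSpace ℂ W] {f : V → W} {x : V}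

theorem Complex.continuousAt_fderiv_of_eventually_differentiableAt
    (hf : ∀ᶠ y in 𝓝 x, DifferentiableAt ℂ f y) : ContinuousAt (fderiv ℂ f) x := by
  rw [Metric.continuousAt_iff']
  intro ε hε
  -- Schwarz lemma for `f` minus its linearization at `x`, which is `o(R)` on balls of radius `R`
  set u : V → W := fun z => f z - f x - fderiv ℂ f x (z - x)
  have hu : ∀ᶠ z in 𝓝 x, ‖u z‖ ≤ ε / 8 * ‖z - x‖ :=
    hf.self_of_nhds.hasFDerivAt.isLittleO.def (by positivity)
  obtain ⟨R, hR, hball⟩ := Metric.eventually_nhds_iff_ball.1 (hf.and hu)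
  filter_upwards [ball_mem_nhds x (half_pos hR)] with y hy
  have hsub : ball y (R / 2) ⊆ ball x R := fun z hz => by
    rw [mem_ball] at hy hz ⊢
    linarith [dist_triangle z y x]
  have hyR := hsub (mem_ball_self (half_pos hR))
  have hud : HasFDerivAt u (fderiv ℂ f y - fderiv ℂ f x) y ∧
      DifferentiableOn ℂ u (ball y (R / 2)) := by
    refine ⟨?_, fun z hz => ?_⟩
    · exact (((hball y hyR).1.hasFDerivAt.sub_const (f x)).sub ((fderiv ℂ f x).hasFDerivAt.comp y
        ((hasFDerivAt_id y).sub_const x))).congr_fderiv (by simp)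
    · exact (((hball z (hsub hz)).1.sub_const _).sub ((fderiv ℂ f x).differentiableAt.comp z
        (differentiableAt_id.sub_const x))).differentiableWithinAt
  have hbound : ∀ w ∈ ball x R, ‖u w‖ ≤ ε * R / 8 := fun w hw => by
    have := (hball w hw).2
    rw [mem_ball, dist_eq_norm] at hw
    nlinarith [norm_nonneg (w - x)]
  have hmaps : MapsTo u (ball y (R / 2)) (closedBall (u y) (ε * R / 4)) := fun z hz => by
    rw [mem_closedBall, dist_eq_norm]
    linarith [norm_sub_le (u z) (u y), hbound z (hsub hz), hbound y hyR]
  rw [dist_eq_norm, ← hud.1.fderiv]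
  calc ‖fderiv ℂ u y‖ ≤ ε * R / 4 / (R / 2) :=
        norm_fderiv_le_div_of_mapsTo_ball hud.2 hmaps (half_pos hR)
    _ < ε := by field_simp; linarith

theorem Complex.contDiffAt_one_of_eventually_differentiableAt
    (hf : ∀ᶠ y in 𝓝 x, DifferentiableAt ℂ f y) : ContDiffAt ℂ 1 f x := by
  rw [contDiffAt_one_iff]
  obtain ⟨s, hs, hso, hxs⟩ := _root_.mem_nhds_iff.1 hf.eventually_nhds
  exact ⟨fderiv ℂ f, s, hso.mem_nhds hxs,
    fun y hy => (continuousAt_fderiv_of_eventually_differentiableAt (hs hy)).continuousWithinAt,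
    fun y hy => (hs hy).self_of_nhds.hasFDerivAt⟩

theorem eventually_differentiableAt_comp {g : V → W} {f : U → V} {x : U} {y : V}
    (hg : ∀ᶠ z in 𝓝 y, DifferentiableAt ℂ g z) (hf : ∀ᶠ z in 𝓝 x, DifferentiableAt ℂ f z)
    (hfx : f x = y) : ∀ᶠ z in 𝓝 x, DifferentiableAt ℂ (g ∘ f) z := by
  subst hfx
  filter_upwards [hf.self_of_nhds.continuousAt.eventually hg, hf] with z hgz hfz
  exact hgz.comp z hfz

theorem eventually_differentiableAt_star_comp_star [StarAddMonoid V] [StarModule ℂ V]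
    [ContinuousStar V] [StarAddMonoid W] [StarModule ℂ W] [ContinuousStar W]
    (hf : ∀ᶠ y in 𝓝 x, DifferentiableAt ℂ f y) :
    ∀ᶠ y in 𝓝 (star x), DifferentiableAt ℂ (star ∘ f ∘ star) y := by
  have hstar : Tendsto star (𝓝 (star x)) (𝓝 x) := by
    simpa using (continuous_star (R := V)).tendsto (star x)
  filter_upwards [hstar.eventually hf] with y hy
  simpa using hy.star_star

end Regularity

theorem HasFDerivAt.apply_eq_zero_of_eventually_eq {𝕜 V W : Type*} [NontriviallyNormedField 𝕜]
    [NormedAddCommGroup V] [NormedSpace 𝕜 V] [NormedAddCommGroup W] [NormedSpace 𝕜 W]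
    {f : V → W} {f' : V →L[𝕜] W} {x v : V} (hf : HasFDerivAt f f' x)
    (hv : ∀ᶠ t : 𝕜 in 𝓝 0, f (x + t • v) = f x) : f' v = 0 :=
  (hf.hasLineDerivAt v).unique ((hasDerivAt_const 0 (f x)).congr_of_eventuallyEq hv)

section RealPoints

variable {F : Type*} [NormedAddCommGroup F] [NormedSpace ℂ F] [CompleteSpace F]

theorem eqOn_zero_of_eventually_ofReal {h : ℂ → F} {U : Set ℂ} (hd : DifferentiableOn ℂ h U)
    (hU : IsOpen U) (hU' : IsPreconnected U) (h0 : 0 ∈ U) (hreal : ∀ᶠ s : ℝ in 𝓝 0, h s = 0) :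
    EqOn h 0 U := by
  refine (hd.analyticOnNhd hU).eqOn_zero_of_preconnected_of_frequently_eq_zero hU' h0 ?_
  have hmap : Tendsto ((↑) : ℝ → ℂ) (𝓝[≠] 0) (𝓝[≠] 0) :=
    continuous_ofReal.continuousWithinAt.tendsto_nhdsWithin fun s hs => by simpa using hs
  exact hmap.frequently (eventually_nhdsWithin_of_eventually_nhds hreal).frequently

variable {Y : Type*} [NormedAddCommGroup Y] [NormedSpace ℂ Y] [StarAddMonoid Y] [StarModule ℂ Y]
  [ContinuousStar Y]

theorem eventuallyEq_zero_of_eventually_star_eq {f : Y → F}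
    (hf : ∀ᶠ y in 𝓝 0, DifferentiableAt ℂ f y) (h : ∀ᶠ y in 𝓝 0, star y = y → f y = 0) :
    f =ᶠ[𝓝 0] 0 := by
  set ℓ : Y → ℂ → Y := fun y t => (ℜ y : Y) + t • (ℑ y : Y)
  have hℓ : Continuous fun p : Y × ℂ => ℓ p.1 p.2 := by
    simp only [ℓ, realPart_apply_coe, imaginaryPart_apply_coe]; fun_prop
  have hℓ0 : ∀ t, ℓ 0 t = 0 := by simp [ℓ]
  have hℓI : ∀ y, ℓ y I = y := realPart_add_I_smul_imaginaryPart
  have hℓreal : ∀ y (s : ℝ), star (ℓ y s) = ℓ y s := fun y s => by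
    simp only [ℓ, star_add, star_smul, Complex.star_def, conj_ofReal, (ℜ y).prop.star_eq,
      (ℑ y).prop.star_eq]
  have huniform : ∀ᶠ y in 𝓝 0, ∀ t ∈ closedBall (0 : ℂ) 2,
      DifferentiableAt ℂ f (ℓ y t) ∧ (star (ℓ y t) = ℓ y t → f (ℓ y t) = 0) :=
    (isCompact_closedBall 0 2).eventually_forall_of_forall_eventually fun t _ => by
      have hft := hf.and h
      rw [← hℓ0 t] at hft
      exact (hℓ.tendsto (0, t)).eventually hft
  filter_upwards [huniform] with y hy
  have hd : DifferentiableOn ℂ (fun t => f (ℓ y t)) (ball 0 2) := fun t ht =>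
    ((hy t (ball_subset_closedBall ht)).1.comp t (by fun_prop)).differentiableWithinAt
  have hreal : ∀ᶠ s : ℝ in 𝓝 0, f (ℓ y s) = 0 := by
    filter_upwards [Metric.ball_mem_nhds (0 : ℝ) two_pos] with s hs
    exact (hy s (by simpa using (mem_ball_zero_iff.1 hs).le)).2 (hℓreal y s)
  simpa [hℓI] using eqOn_zero_of_eventually_ofReal hd isOpen_ball
    (convex_ball 0 2).isPreconnected (mem_ball_self two_pos) hreal (show I ∈ ball (0 : ℂ) 2 by simp)

variable {E W : Type*} [NormedAddCommGroup E] [NormedSpace ℂ E] [StarAddMonoid E]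
  [StarModule ℂ E] [ContinuousStar E] [NormedAddCommGroup W] [NormedSpace ℂ W] [StarAddMonoid W]
  [StarModule ℂ W] [ContinuousStar W]

theorem eventuallyEq_zero_of_eventually_antidiagonal_eq_zero {g : E × E × W → F}
    (hg : ∀ᶠ y in 𝓝 0, DifferentiableAt ℂ g y)
    (h : ∀ᶠ p in 𝓝 (0 : E × W), star p.2 = p.2 → g (p.1, star p.1, p.2) = 0) :
    g =ᶠ[𝓝 0] 0 := by
  -- `T` maps the real points onto `{(ζ, star ζ, σ) | star σ = σ}`
  set T : E × E × W → E × E × W := fun y => (y.1 + I • y.2.1, y.1 - I • y.2.1, y.2.2)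
  set S : E × E × W → E × E × W := fun y =>
    ((2 : ℂ)⁻¹ • (y.1 + y.2.1), (2 : ℂ)⁻¹ • -I • (y.1 - y.2.1), y.2.2)
  have hTS : ∀ y, T (S y) = y := fun y => by
    ext <;> simp only [T, S]
    all_goals match_scalars <;> ring_nf <;> simp only [I_sq] <;> norm_num
  have hT : Tendsto T (𝓝 0) (𝓝 0) := (show Continuous T by fun_prop).tendsto' 0 0 (by simp [T])
  have hS : Tendsto S (𝓝 0) (𝓝 0) := (show Continuous S by fun_prop).tendsto' 0 0 (by simp [S])
  have hgT : ∀ᶠ y in 𝓝 0, DifferentiableAt ℂ (g ∘ T) y :=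
    (hT.eventually hg).mono fun y hy => hy.comp y (by fun_prop)
  have hreal : ∀ᶠ y in 𝓝 0, star y = y → (g ∘ T) y = 0 := by
    have hP : Tendsto (fun y : E × E × W => (y.1 + I • y.2.1, y.2.2)) (𝓝 0) (𝓝 0) :=
      (show Continuous fun y : E × E × W => (y.1 + I • y.2.1, y.2.2) by fun_prop).tendsto' 0 0
        (by simp)
    filter_upwards [hP.eventually h] with y hy hstar
    simp only [Prod.ext_iff, Prod.fst_star, Prod.snd_star] at hstar
    have := hy hstar.2.2
    simpa [T, star_smul, hstar.1, hstar.2.1, sub_eq_add_neg] using this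
  filter_upwards [hS.eventually (eventuallyEq_zero_of_eventually_star_eq hgT hreal)] with y hy
  simpa [hTS] using hy

end RealPoints

section NormalCoordinates

theorem apply_zero_eq_zero_of_eventually_normal {E W : Type*} [TopologicalSpace E] [Zero E]
    [TopologicalSpace W] [Zero W] {r : E × E × W → W}
    (hrnorm : ∀ᶠ p in 𝓝 (0 : E × W), r (p.1, 0, p.2) = p.2 ∧ r (0, p.1, p.2) = p.2) :
    r 0 = 0 := by
  simpa only [Prod.fst_zero, Prod.snd_zero, Prod.mk_zero_zero] using hrnorm.self_of_nhds.1

noncomputable def straighten {E W : Type*} [AddCommGroup W] [Module ℂ W] (r : E × E × W → W)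
    (y : E × E × W) : E × E × W :=
  (y.1, y.2.1, (2 : ℂ)⁻¹ • (y.2.2 + r y))

theorem straighten_reflect {E W : Type*} [Star E] [AddCommGroup W] [Module ℂ W]
    [StarAddMonoid W] [StarModule ℂ W] {r : E × E × W → W} {ζ : E} {τ : W}
    (hreal : r (ζ, star ζ, star (r (ζ, star ζ, τ))) = star τ)
    (hσ : star (straighten r (ζ, star ζ, τ)).2.2 = (straighten r (ζ, star ζ, τ)).2.2) :
    straighten r (ζ, star ζ, star (r (ζ, star ζ, τ))) = straighten r (ζ, star ζ, τ) := by
  simp only [straighten] at hσ ⊢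
  rw [hreal, ← hσ]
  simp [star_smul, add_comm]

theorem eventually_eq_star_of_straighten_real {E W : Type*} [NormedAddCommGroup E]
    [InvolutiveStar E] [NormedAddCommGroup W] [NormedSpace ℂ W] [StarAddMonoid W] [StarModule ℂ W]
    [ContinuousStar W] {r : E × E × W → W} {s : Set (E × E × W)} (hs : s ∈ 𝓝 0)
    (hinj : InjOn (straighten r) s) (hr : ContinuousAt r 0) (hr0 : r 0 = 0)
    (hrreal : ∀ᶠ p in 𝓝 (0 : E × E × W),
      r (p.1, p.2.1, star (r (star p.2.1, star p.1, star p.2.2))) = p.2.2) :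
    ∀ᶠ y in 𝓝 0, y.2.1 = star y.1 → star (straighten r y).2.2 = (straighten r y).2.2 →
      r y = star y.2.2 := by
  have hreflect : Tendsto (fun y : E × E × W => (y.1, y.2.1, star (r y))) (𝓝 0) (𝓝 0) := by
    have : ContinuousAt (fun y : E × E × W => (y.1, y.2.1, star (r y))) 0 := by fun_prop
    simpa [ContinuousAt, hr0, Prod.mk_zero_zero] using this
  have hconj : Tendsto (fun y : E × E × W => (y.1, y.2.1, star y.2.2)) (𝓝 0) (𝓝 0) :=
    (show Continuous fun y : E × E × W => (y.1, y.2.1, star y.2.2) by fun_prop).tendsto' 0 0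
      (by simp)
  filter_upwards [hs, hreflect.eventually hs, hconj.eventually hrreal]
    with ⟨ζ, χ, τ⟩ hy hy' hreal hanti hσ
  simp only at hy' hreal hanti ⊢
  subst hanti
  -- the point and its reflection `(ζ, ζ̄, conj (r (ζ, ζ̄, τ)))` have the same image
  have := congrArg (fun y => star y.2.2)
    (hinj hy' hy (straighten_reflect (by simpa using hreal) hσ))
  simpa using this

variable {E W : Type*} [NormedAddCommGroup E] [NormedSpace ℂ E] [NormedAddCommGroup W]
  [NormedSpace ℂ W] {r : E × E × W → W}

theorem hasFDerivAt_snd_snd_of_eventually_normal (hr : DifferentiableAt ℂ r 0)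
    (hrnorm : ∀ᶠ p in 𝓝 (0 : E × W), r (p.1, 0, p.2) = p.2 ∧ r (0, p.1, p.2) = p.2) :
    HasFDerivAt r
      ((ContinuousLinearMap.snd ℂ E W).comp (ContinuousLinearMap.snd ℂ E (E × W))) 0 := by
  set L := (ContinuousLinearMap.snd ℂ E W).comp (ContinuousLinearMap.snd ℂ E (E × W))
  have hr0 := apply_zero_eq_zero_of_eventually_normal hrnorm
  have hvanish : ∀ v, (∀ᶠ t : ℂ in 𝓝 0, r (t • v) = L (t • v)) → (fderiv ℂ r 0 - L) v = 0 :=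
    fun v hv => (hr.hasFDerivAt.sub L.hasFDerivAt).apply_eq_zero_of_eventually_eq <| by
      filter_upwards [hv] with t ht
      simp [ht, hr0]
  have hline : ∀ p : E × W, Tendsto (fun t : ℂ => t • p) (𝓝 0) (𝓝 0) := fun p =>
    (continuous_id.smul continuous_const).tendsto' 0 0 (zero_smul ℂ p)
  suffices fderiv ℂ r 0 = L from this ▸ hr.hasFDerivAt
  refine ContinuousLinearMap.ext fun y => ?_
  have h1 : (fderiv ℂ r 0 - L) (y.1, 0, y.2.2) = 0 := hvanish _ <| by
    filter_upwards [(hline (y.1, y.2.2)).eventually hrnorm] with t ht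
    simpa [L] using ht.1
  have h2 : (fderiv ℂ r 0 - L) (0, y.2.1, 0) = 0 := hvanish _ <| by
    filter_upwards [(hline (y.2.1, 0)).eventually hrnorm] with t ht
    simpa [L] using ht.2
  have hy : y = (y.1, 0, y.2.2) + (0, y.2.1, 0) := by simp
  rw [← sub_eq_zero, ← sub_apply, hy, map_add, h1, h2, add_zero]

theorem hasFDerivAt_straighten (hr : DifferentiableAt ℂ r 0)
    (hrnorm : ∀ᶠ p in 𝓝 (0 : E × W), r (p.1, 0, p.2) = p.2 ∧ r (0, p.1, p.2) = p.2) :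
    HasFDerivAt (straighten r) (ContinuousLinearMap.id ℂ (E × E × W)) 0 := by
  refine (hasFDerivAt_fst.prodMk (hasFDerivAt_snd.fst.prodMk ((hasFDerivAt_snd.snd.add
    (hasFDerivAt_snd_snd_of_eventually_normal hr hrnorm)).const_smul (2 : ℂ)⁻¹))).congr_fderiv
      (ContinuousLinearMap.ext fun y => ?_)
  ext <;> simp
  module

variable [CompleteSpace E] [CompleteSpace W]

theorem exists_openPartialHomeomorph_straighten (hr : ∀ᶠ y in 𝓝 0, DifferentiableAt ℂ r y)
    (hrnorm : ∀ᶠ p in 𝓝 (0 : E × W), r (p.1, 0, p.2) = p.2 ∧ r (0, p.1, p.2) = p.2) :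
    ∃ Φ : OpenPartialHomeomorph (E × E × W) (E × E × W), ⇑Φ = straighten r ∧ 0 ∈ Φ.source ∧
      Φ.target ∈ 𝓝 0 ∧ Φ.symm 0 = 0 ∧ ∀ᶠ x in 𝓝 0, DifferentiableAt ℂ Φ.symm x := by
  have hr0 := apply_zero_eq_zero_of_eventually_normal hrnorm
  have hΦ : ContDiffAt ℂ 1 (straighten r) 0 := by
    have := Complex.contDiffAt_one_of_eventually_differentiableAt hr
    unfold straighten
    fun_prop
  have hΦ' : HasFDerivAt (straighten r)
      ((ContinuousLinearEquiv.refl ℂ (E × E × W) : (E × E × W) ≃L[ℂ] (E × E × W)) :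
        (E × E × W) →L[ℂ] (E × E × W)) 0 :=
    hasFDerivAt_straighten hr.self_of_nhds hrnorm
  set Φ := hΦ.toOpenPartialHomeomorph (straighten r) hΦ' one_ne_zero
  have h0 : 0 ∈ Φ.source := hΦ.mem_toOpenPartialHomeomorph_source hΦ' one_ne_zero
  have hΦ0 : Φ 0 = 0 := by simp [Φ, straighten, hr0]
  refine ⟨Φ, rfl, h0, ?_, by simpa [hΦ0] using Φ.left_inv h0, ?_⟩
  · exact hΦ0 ▸ Φ.open_target.mem_nhds
      (hΦ.image_mem_toOpenPartialHomeomorph_target hΦ' one_ne_zero)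
  · have hsymm : ContDiffAt ℂ 1 Φ.symm 0 := hΦ0 ▸ hΦ.to_localInverse hΦ' one_ne_zero
    exact (hsymm.eventually (by simp)).mono fun x hx => hx.differentiableAt one_ne_zero

variable [StarAddMonoid E] [StarModule ℂ E] [ContinuousStar E] [StarAddMonoid W] [StarModule ℂ W]
  [ContinuousStar W] {F : Type*} [NormedAddCommGroup F] [NormedSpace ℂ F] [CompleteSpace F]

theorem eventuallyEq_zero_of_eventually_eq_zero_on_submanifold {g : E × E × W → F}
    (hr : ∀ᶠ y in 𝓝 0, DifferentiableAt ℂ r y)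
    (hrnorm : ∀ᶠ p in 𝓝 (0 : E × W), r (p.1, 0, p.2) = p.2 ∧ r (0, p.1, p.2) = p.2)
    (hrreal : ∀ᶠ p in 𝓝 (0 : E × E × W),
      r (p.1, p.2.1, star (r (star p.2.1, star p.1, star p.2.2))) = p.2.2)
    (hg : ∀ᶠ y in 𝓝 0, DifferentiableAt ℂ g y)
    (hgN : ∀ᶠ p in 𝓝 (0 : E × W),
      r (p.1, star p.1, p.2) = star p.2 → g (p.1, star p.1, p.2) = 0) :
    g =ᶠ[𝓝 0] 0 := by
  obtain ⟨Φ, hΦ, h0, htarget, hsymm0, hsymm⟩ := exists_openPartialHomeomorph_straighten hr hrnorm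
  have hfix := eventually_eq_star_of_straighten_real (Φ.open_source.mem_nhds h0) (hΦ ▸ Φ.injOn)
    hr.self_of_nhds.continuousAt (apply_zero_eq_zero_of_eventually_normal hrnorm) hrreal
  have hvan : ∀ᶠ p in 𝓝 (0 : E × W), star p.2 = p.2 → g (Φ.symm (p.1, star p.1, p.2)) = 0 := by
    have hanti : Tendsto (fun p : E × W => ((p.1, star p.1, p.2) : E × E × W)) (𝓝 0) (𝓝 0) :=
      (show Continuous fun p : E × W => ((p.1, star p.1, p.2) : E × E × W) by
        fun_prop).tendsto' 0 0 (by simp)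
    have hpre : Tendsto (fun p : E × W => Φ.symm (p.1, star p.1, p.2)) (𝓝 0) (𝓝 0) :=
      (hsymm0 ▸ (Φ.continuousAt_symm (mem_of_mem_nhds htarget)).tendsto).comp hanti
    have hproj : Tendsto (fun y : E × E × W => (y.1, y.2.2)) (𝓝 0) (𝓝 0) :=
      (show Continuous fun y : E × E × W => (y.1, y.2.2) by fun_prop).tendsto' 0 0 (by simp)
    filter_upwards [hanti.eventually htarget, hpre.eventually hfix,
      (hproj.comp hpre).eventually hgN] with ⟨ζ, σ⟩ hx hfixp hgp hreal
    obtain ⟨⟨ζ', χ', τ⟩, hy⟩ : ∃ y, Φ.symm (ζ, star ζ, σ) = y := ⟨_, rfl⟩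
    have hΦy : straighten r (ζ', χ', τ) = (ζ, star ζ, σ) := by
      rw [← hy, ← hΦ]
      exact Φ.right_inv hx
    have hcomp := hΦy
    simp only [straighten, Prod.mk.injEq] at hcomp
    obtain ⟨rfl, rfl, -⟩ := hcomp
    simp only [hy, Function.comp_apply] at hgp ⊢
    rw [hy, hΦy] at hfixp
    exact hgp (hfixp rfl hreal)
  have hΦt : Tendsto Φ (𝓝 0) (𝓝 0) := by
    have hΦ0 : Φ 0 = 0 := by simpa [hsymm0] using Φ.right_inv (mem_of_mem_nhds htarget)
    have : Tendsto Φ (𝓝 0) (𝓝 (Φ 0)) := (Φ.continuousAt h0).tendsto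
    rwa [hΦ0] at this
  filter_upwards [Φ.open_source.mem_nhds h0, hΦt.eventually
    (eventuallyEq_zero_of_eventually_antidiagonal_eq_zero
      (eventually_differentiableAt_comp hg hsymm hsymm0) hvan)] with y hy hgy
  simpa [Φ.left_inv hy] using hgy

variable {P : Type*} [NormedAddCommGroup P] [NormedSpace ℂ P] [StarAddMonoid P] [StarModule ℂ P]
  [ContinuousStar P]

theorem eventually_eq_of_eventually_eq_on_submanifold {ρ : P × P → F} {F' : E × W → P}
    {Fn : E × W → F} (hρ : ∀ᶠ x in 𝓝 0, DifferentiableAt ℂ ρ x)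
    (hr : ∀ᶠ y in 𝓝 0, DifferentiableAt ℂ r y)
    (hrnorm : ∀ᶠ p in 𝓝 (0 : E × W), r (p.1, 0, p.2) = p.2 ∧ r (0, p.1, p.2) = p.2)
    (hrreal : ∀ᶠ p in 𝓝 (0 : E × E × W),
      r (p.1, p.2.1, star (r (star p.2.1, star p.1, star p.2.2))) = p.2.2)
    (hF' : ∀ᶠ x in 𝓝 0, DifferentiableAt ℂ F' x) (hFn : ∀ᶠ x in 𝓝 0, DifferentiableAt ℂ Fn x)
    (hF'0 : F' 0 = 0)
    (hCR : ∀ᶠ p in 𝓝 (0 : E × W),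
      p.2 = r (p.1, star p.1, star p.2) → Fn p = ρ (F' p, star (F' p))) :
    ∀ᶠ p in 𝓝 (0 : E × W), Fn p = ρ (F' p, star (F' (0, star p.2))) := by
  have hr0 := apply_zero_eq_zero_of_eventually_normal hrnorm
  have hgraph : ∀ᶠ y in 𝓝 (0 : E × E × W), DifferentiableAt ℂ (fun y => (y.1, r y)) y :=
    hr.mono fun y h => differentiableAt_fst.prodMk h
  have hgraph0 : (fun y : E × E × W => (y.1, r y)) 0 = 0 := by simp [hr0]
  have hF'bar : ∀ᶠ x in 𝓝 0, DifferentiableAt ℂ (star ∘ F' ∘ star) x := by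
    simpa using eventually_differentiableAt_star_comp_star hF'
  have hpair : ∀ᶠ y in 𝓝 (0 : E × E × W),
      DifferentiableAt ℂ (fun y => (F' (y.1, r y), star (F' (star y.2)))) y := by
    filter_upwards [eventually_differentiableAt_comp hF' hgraph hgraph0,
      (continuous_snd.tendsto' _ _ rfl).eventually hF'bar] with y h1 h2
    exact h1.prodMk (h2.comp y differentiableAt_snd)
  have hΨ : (fun y : E × E × W => Fn (y.1, r y) - ρ (F' (y.1, r y), star (F' (star y.2))))
      =ᶠ[𝓝 0] 0 := by
    refine eventuallyEq_zero_of_eventually_eq_zero_on_submanifold hr hrnorm hrreal ?_ ?_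
    · filter_upwards [eventually_differentiableAt_comp hFn hgraph hgraph0,
        eventually_differentiableAt_comp hρ hpair (by simp [hr0, hF'0, Prod.mk_zero_zero])]
        with y h1 h2
      exact h1.sub h2
    · have hflip : Tendsto (fun p : E × W => (p.1, star p.2)) (𝓝 0) (𝓝 0) :=
        (show Continuous fun p : E × W => (p.1, star p.2) by fun_prop).tendsto' 0 0 (by simp)
      filter_upwards [hflip.eventually hCR] with ⟨ζ, τ⟩ hp hN
      have hstar : star (star ζ, τ) = (ζ, star τ) := Prod.ext (star_star ζ) rfl
      simp only [star_star] at hp ⊢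
      rw [hN, hstar, hp hN.symm, sub_self]
  have hslice : Tendsto (fun p : E × W => ((p.1, 0, p.2) : E × E × W)) (𝓝 0) (𝓝 0) :=
    (show Continuous fun p : E × W => ((p.1, 0, p.2) : E × E × W) by fun_prop).tendsto' 0 0
      (by simp)
  filter_upwards [hslice.eventually hΨ, hrnorm] with p hp hnorm
  have hstar : star ((0 : E), p.2) = (0, star p.2) := Prod.ext (star_zero _) rfl
  simpa [hnorm.1, sub_eq_zero, hstar] using hp

end NormalCoordinates

theorem stmt7_general (n : ℕ)
    (ρ : (Fin (n - 1) → ℂ) × (Fin (n - 1) → ℂ) → ℂ)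
    (hρ : ∀ᶠ x in 𝓝 (0 : (Fin (n - 1) → ℂ) × (Fin (n - 1) → ℂ)), DifferentiableAt ℂ ρ x)
    (hρvan : ∀ᶠ χ in 𝓝 (0 : Fin (n - 1) → ℂ), ρ (0, χ) = 0)
    (r : (Fin (n - 2) → ℂ) × (Fin (n - 2) → ℂ) × (ℂ × ℂ) → ℂ × ℂ)
    (hr : ∀ᶠ x in 𝓝 (0 : (Fin (n - 2) → ℂ) × (Fin (n - 2) → ℂ) × (ℂ × ℂ)),
      DifferentiableAt ℂ r x)
    (hrnorm : ∀ᶠ p in 𝓝 (0 : (Fin (n - 2) → ℂ) × (ℂ × ℂ)),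
      r (p.1, 0, p.2) = p.2 ∧ r (0, p.1, p.2) = p.2)
    (hrreal : ∀ᶠ p in 𝓝 (0 : (Fin (n - 2) → ℂ) × (Fin (n - 2) → ℂ) × (ℂ × ℂ)),
      r (p.1, p.2.1, star (r (star p.2.1, star p.1, star p.2.2))) = p.2.2)
    (F' : (Fin (n - 2) → ℂ) × (ℂ × ℂ) → (Fin (n - 1) → ℂ))
    (Fn : (Fin (n - 2) → ℂ) × (ℂ × ℂ) → ℂ)
    (hF' : ∀ᶠ x in 𝓝 (0 : (Fin (n - 2) → ℂ) × (ℂ × ℂ)), DifferentiableAt ℂ F' x)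
    (hFn : ∀ᶠ x in 𝓝 (0 : (Fin (n - 2) → ℂ) × (ℂ × ℂ)), DifferentiableAt ℂ Fn x)
    (hF'0 : F' 0 = 0)
    (hCR : ∀ᶠ p in 𝓝 (0 : (Fin (n - 2) → ℂ) × (ℂ × ℂ)),
      p.2 = r (p.1, star p.1, star p.2) → Fn p = ρ (F' p, star (F' p))) :
    (∀ᶠ p in 𝓝 (0 : (Fin (n - 2) → ℂ) × (ℂ × ℂ)),
      Fn p = ρ (F' p, star (F' (0, star p.2)))) ∧
    (∀ᶠ p in 𝓝 (0 : (Fin (n - 2) → ℂ) × (ℂ × ℂ)), F' p = 0 → Fn p = 0) := by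
  have hidentity :=
    eventually_eq_of_eventually_eq_on_submanifold hρ hr hrnorm hrreal hF' hFn hF'0 hCR
  refine ⟨hidentity, ?_⟩
  have hconj : Tendsto (fun p : (Fin (n - 2) → ℂ) × (ℂ × ℂ) => star (F' (0, star p.2)))
      (𝓝 0) (𝓝 0) := by
    have : ContinuousAt (fun p : (Fin (n - 2) → ℂ) × (ℂ × ℂ) => star (F' (0, star p.2))) 0 :=
      continuous_star.continuousAt.comp
        (hF'.self_of_nhds.continuousAt.comp_of_eq (by fun_prop) (by simp [Prod.mk_zero_zero]))
    simpa [ContinuousAt, hF'0, Prod.mk_zero_zero] using this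
  filter_upwards [hidentity, hconj.eventually hρvan] with p hp hvan hF'p
  rw [hp, hF'p, hvan]

/-- Proposition 2.4: if ρ(0, χ) ≡ 0 and F = (F', Fₙ) satisfies the graphing equation
Fₙ = ρ(F', conj F') on the generic submanifold N given in normal coordinates, then
Fₙ(ζ, ω) = ρ(F'(ζ, ω), conj(F'(0, ω̄))) holds identically near 0; in particular Fₙ
vanishes wherever F' does, so F cannot be a finite map. -/
theorem stmt7 (n : ℕ) (hn : 3 ≤ n)
    (ρ : (Fin (n - 1) → ℂ) × (Fin (n - 1) → ℂ) → ℂ)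
    (hρ : ∀ᶠ x in 𝓝 (0 : (Fin (n - 1) → ℂ) × (Fin (n - 1) → ℂ)), DifferentiableAt ℂ ρ x)
    (hρ0 : ρ 0 = 0) (hdρ0 : fderiv ℂ ρ 0 = 0)
    (hρvan : ∀ᶠ χ in 𝓝 (0 : Fin (n - 1) → ℂ), ρ (0, χ) = 0)
    (r : (Fin (n - 2) → ℂ) × (Fin (n - 2) → ℂ) × (ℂ × ℂ) → ℂ × ℂ)
    (hr : ∀ᶠ x in 𝓝 (0 : (Fin (n - 2) → ℂ) × (Fin (n - 2) → ℂ) × (ℂ × ℂ)),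
      DifferentiableAt ℂ r x)
    (hrnorm : ∀ᶠ p in 𝓝 (0 : (Fin (n - 2) → ℂ) × (ℂ × ℂ)),
      r (p.1, 0, p.2) = p.2 ∧ r (0, p.1, p.2) = p.2)
    (hrreal : ∀ᶠ p in 𝓝 (0 : (Fin (n - 2) → ℂ) × (Fin (n - 2) → ℂ) × (ℂ × ℂ)),
      r (p.1, p.2.1, star (r (star p.2.1, star p.1, star p.2.2))) = p.2.2)
    (F' : (Fin (n - 2) → ℂ) × (ℂ × ℂ) → (Fin (n - 1) → ℂ))
    (Fn : (Fin (n - 2) → ℂ) × (ℂ × ℂ) → ℂ)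
    (hF' : ∀ᶠ x in 𝓝 (0 : (Fin (n - 2) → ℂ) × (ℂ × ℂ)), DifferentiableAt ℂ F' x)
    (hFn : ∀ᶠ x in 𝓝 (0 : (Fin (n - 2) → ℂ) × (ℂ × ℂ)), DifferentiableAt ℂ Fn x)
    (hF'0 : F' 0 = 0) (hFn0 : Fn 0 = 0)
    (hCR : ∀ᶠ p in 𝓝 (0 : (Fin (n - 2) → ℂ) × (ℂ × ℂ)),
      p.2 = r (p.1, star p.1, star p.2) → Fn p = ρ (F' p, star (F' p))) :
    (∀ᶠ p in 𝓝 (0 : (Fin (n - 2) → ℂ) × (ℂ × ℂ)),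
      Fn p = ρ (F' p, star (F' (0, star p.2)))) ∧
    (∀ᶠ p in 𝓝 (0 : (Fin (n - 2) → ℂ) × (ℂ × ℂ)), F' p = 0 → Fn p = 0) :=
  stmt7_general n ρ hρ hρvan r hr hrnorm hrreal F' Fn hF' hFn hF'0 hCR
end

section
/- Define f : ℝ × ℝ × ℂ → ℂ³ by f(x, y, ξ) = (ξ, x + i y, ρ(ξ, x + i y, x − i y)). Then: (a) f maps a neighborhood of the origin in ℝ² × ℂ into M; (b) f is injective; (c) at every point sufficiently near the origin the real Fréchet derivative of f is injective (f is a real-analytic immersion); and (d) for each fixed (x, y), the map ξ ↦ f(x, y, ξ) is holomorphic in ξ, so f is a CR map for the CR structure on ℝ² × ℂ spanned by ∂/∂ξ̄. Hence near each of its points M is the image of an open subset of ℝ² × ℂ under a real-analytic CR diffeomorphism onto its image. (Second assertion of Proposition 8.1.) -/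
/-!
Identifying `ℝ² × ℂ` with `ℂ²` through the real-linear bijection `(x, y, ξ) ↦ (ξ, x + iy)`,
the map `f` becomes the graph map `(z₁, z₂) ↦ (z₁, z₂, ρ(z₁, z₂, z̄₂))` of `M`. A graph map has
the projection to `ℂ²` as a left inverse, so it is injective and so is every derivative it has;
it is holomorphic in `z₁` because `z̄₂` does not involve `z₁`.
-/

open Complex ComplexConjugate Filter Topology

theorem HasFDerivAt.injective_of_leftInverse {𝕜 E F : Type*} [NontriviallyNormedField 𝕜]
    [NormedAddCommGroup E] [NormedSpace 𝕜 E] [NormedAddCommGroup F] [NormedSpace 𝕜 F]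
    {Φ : E → F} {Φ' : E →L[𝕜] F} {x : E} (hΦ : HasFDerivAt Φ Φ' x) (π : F →L[𝕜] E)
    (hπ : Function.LeftInverse π Φ) : Function.Injective Φ' := by
  have hid : HasFDerivAt (π ∘ Φ) (π.comp Φ') x := π.hasFDerivAt.comp x hΦ
  rw [hπ.comp_eq_id] at hid
  have : π.comp Φ' = ContinuousLinearMap.id 𝕜 E := hid.unique (hasFDerivAt_id x)
  exact Function.LeftInverse.injective (g := π) fun v => congrArg (· v) this

noncomputable def realCoords : ℝ × ℝ × ℂ →L[ℝ] ℂ × ℂ :=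
  (ContinuousLinearMap.snd ℝ ℝ ℂ ∘L ContinuousLinearMap.snd ℝ ℝ (ℝ × ℂ)).prod
    ((ContinuousLinearMap.fst ℝ ℝ (ℝ × ℂ)).smulRight 1 +
      (ContinuousLinearMap.fst ℝ ℝ ℂ ∘L ContinuousLinearMap.snd ℝ ℝ (ℝ × ℂ)).smulRight I)

@[simp] theorem realCoords_apply (p : ℝ × ℝ × ℂ) :
    realCoords p = (p.2.2, (p.1 : ℂ) + p.2.1 * I) := by
  simp [realCoords, Complex.real_smul]

theorem realCoords_injective : Function.Injective realCoords := by
  rintro ⟨x, y, ξ⟩ ⟨x', y', ξ'⟩ h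
  obtain ⟨rfl, hz⟩ := Prod.mk.inj (by simpa using h)
  obtain ⟨rfl, rfl⟩ : x = x' ∧ y = y' := by simpa [Complex.ext_iff] using hz
  rfl

def withConj (q : ℂ × ℂ) : ℂ × ℂ × ℂ := (q.1, q.2, conj q.2)

theorem differentiable_withConj : Differentiable ℝ withConj := by
  unfold withConj; fun_prop

def graphMap (ρ : ℂ × ℂ × ℂ → ℂ) (q : ℂ × ℂ) : ℂ × ℂ × ℂ := (q.1, q.2, ρ (withConj q))

section graphMap

variable (ρ : ℂ × ℂ × ℂ → ℂ)

theorem graphMap_mem (q : ℂ × ℂ) :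
    graphMap ρ q ∈ {p : ℂ × ℂ × ℂ | p.2.2 = ρ (p.1, p.2.1, conj p.2.1)} :=
  rfl

theorem leftInverse_graphMap :
    Function.LeftInverse ((ContinuousLinearMap.fst ℝ ℂ (ℂ × ℂ)).prod
      (ContinuousLinearMap.fst ℝ ℂ ℂ ∘L ContinuousLinearMap.snd ℝ ℂ (ℂ × ℂ))) (graphMap ρ) :=
  fun _ => rfl

variable {ρ}

theorem differentiableAt_graphMap {q : ℂ × ℂ} (hρ : DifferentiableAt ℂ ρ (withConj q)) :
    DifferentiableAt ℝ (graphMap ρ) q := by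
  have hρℝ : DifferentiableAt ℝ (ρ ∘ withConj) q :=
    (hρ.restrictScalars ℝ).comp q (differentiable_withConj q)
  exact differentiableAt_fst.prodMk (differentiableAt_snd.prodMk hρℝ)

theorem differentiableAt_graphMap_fst {a b : ℂ} (hρ : DifferentiableAt ℂ ρ (withConj (a, b))) :
    DifferentiableAt ℂ (fun ξ => graphMap ρ (ξ, b)) a :=
  differentiableAt_id.prodMk <| (differentiableAt_const b).prodMk <|
    hρ.comp a (differentiableAt_id.prodMk (differentiableAt_const (b, conj b)))

end graphMap

theorem stmt10_general (ρ : ℂ × ℂ × ℂ → ℂ)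
    (hρ : ∀ᶠ x in 𝓝 (0 : ℂ × ℂ × ℂ), DifferentiableAt ℂ ρ x)
    (M : Set (ℂ × ℂ × ℂ))
    (hM : M = {p : ℂ × ℂ × ℂ | p.2.2 = ρ (p.1, p.2.1, starRingEnd ℂ p.2.1)})
    (f : ℝ × ℝ × ℂ → ℂ × ℂ × ℂ)
    (hf : ∀ (x y : ℝ) (ξ : ℂ),
      f (x, y, ξ) = (ξ, (x : ℂ) + (y : ℂ) * I, ρ (ξ, (x : ℂ) + (y : ℂ) * I, (x : ℂ) - (y : ℂ) * I))) :
    (∃ V ∈ 𝓝 (0 : ℝ × ℝ × ℂ), ∀ p ∈ V, f p ∈ M) ∧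
    Function.Injective f ∧
    (∀ᶠ p in 𝓝 (0 : ℝ × ℝ × ℂ),
      DifferentiableAt ℝ f p ∧ Function.Injective (fderiv ℝ f p)) ∧
    (∀ᶠ p in 𝓝 (0 : ℝ × ℝ × ℂ),
      DifferentiableAt ℂ (fun ξ : ℂ => f (p.1, p.2.1, ξ)) p.2.2) := by
  have hf : f = graphMap ρ ∘ realCoords := funext fun ⟨x, y, ξ⟩ => by
    simp [hf, graphMap, withConj, sub_eq_add_neg]
  have hev : ∀ᶠ p in 𝓝 (0 : ℝ × ℝ × ℂ), DifferentiableAt ℂ ρ (withConj (realCoords p)) := by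
    have hcont := (differentiable_withConj.continuous.comp realCoords.continuous).tendsto' 0 0
      (by simp [withConj])
    exact hcont.eventually hρ
  subst hM hf
  refine ⟨⟨Set.univ, univ_mem, fun p _ => graphMap_mem ρ _⟩,
    (leftInverse_graphMap ρ).injective.comp realCoords_injective, ?_, ?_⟩
  · filter_upwards [hev] with p hp
    have hΦ := (differentiableAt_graphMap hp).hasFDerivAt
    have hfp := hΦ.comp p realCoords.hasFDerivAt
    refine ⟨hfp.differentiableAt, ?_⟩
    rw [hfp.fderiv]
    exact (hΦ.injective_of_leftInverse _ (leftInverse_graphMap ρ)).comp realCoords_injective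
  · filter_upwards [hev] with p hp
    exact differentiableAt_graphMap_fst hp

/-- Proposition 8.1, second assertion: the map f(x, y, ξ) = (ξ, x + iy, ρ(ξ, x + iy, x − iy))
is a real-analytic CR diffeomorphism from a neighborhood of the origin in ℝ² × ℂ onto
its image in M = {w = ρ(z₁, z₂, z̄₂)}. -/
theorem stmt10 (ρ : ℂ × ℂ × ℂ → ℂ)
    (hρ : ∀ᶠ x in 𝓝 (0 : ℂ × ℂ × ℂ), DifferentiableAt ℂ ρ x)
    (hρ0 : ρ 0 = 0) (hdρ0 : fderiv ℂ ρ 0 = 0)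
    (M : Set (ℂ × ℂ × ℂ))
    (hM : M = {p : ℂ × ℂ × ℂ | p.2.2 = ρ (p.1, p.2.1, starRingEnd ℂ p.2.1)})
    (f : ℝ × ℝ × ℂ → ℂ × ℂ × ℂ)
    (hf : ∀ (x y : ℝ) (ξ : ℂ),
      f (x, y, ξ) = (ξ, (x : ℂ) + (y : ℂ) * I, ρ (ξ, (x : ℂ) + (y : ℂ) * I, (x : ℂ) - (y : ℂ) * I))) :
    (∃ V ∈ 𝓝 (0 : ℝ × ℝ × ℂ), ∀ p ∈ V, f p ∈ M) ∧
    Function.Injective f ∧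
    (∀ᶠ p in 𝓝 (0 : ℝ × ℝ × ℂ),
      DifferentiableAt ℝ f p ∧ Function.Injective (fderiv ℝ f p)) ∧
    (∀ᶠ p in 𝓝 (0 : ℝ × ℝ × ℂ),
      DifferentiableAt ℂ (fun ξ : ℂ => f (p.1, p.2.1, ξ)) p.2.2) :=
  stmt10_general ρ hρ M hM f hf
end

section
/- (a) For every (z, w₁, w₂) ∈ M one has the identity w₁ − i w₂ = conj(w₁ + i w₂) + i|z|² + |z|⁴; consequently G(M) ⊆ M', i.e., for every (z, w₁, w₂) ∈ M the point G(z, w₁, w₂) satisfies (w₁ − i w₂)² = (conj(w₁ + i w₂) + i|z|² + |z|⁴)², so the image point lies on M'. (b) The restriction of G to M is injective: if p, q ∈ M and G(p) = G(q), then p = q. (Claims of Example 8.6: the finite holomorphic map G restricted to the finite-type generic submanifold M is a diffeomorphism onto the CR singular image M'.) -/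
/-!
Writing `w₁ = u₁ + i v₁`, `w₂ = u₂ + i v₂`, one has the identity
`w₁ − i w₂ = conj (w₁ + i w₂) + 2i v₁ + 2 v₂` for all `w₁, w₂`. On `M` the imaginary parts are
`|z|²/2` and `|z|⁴/2`, so the third component of `G` is the square of a function of the first
two, which is the equation of `M'`. The same identity recovers `w₁ − i w₂` from `z` and
`w₁ + i w₂`, and `(w₁, w₂)` is recovered from `w₁ ± i w₂`, so `G` is injective on `M`.
-/

open Complex

theorem Complex.sub_I_mul_eq_conj_add_I_mul (w₁ w₂ : ℂ) :
    w₁ - I * w₂ = starRingEnd ℂ (w₁ + I * w₂) + I * ((2 * w₁.im : ℝ) : ℂ) + ((2 * w₂.im : ℝ) : ℂ) := by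
  rw [map_add, map_mul, conj_I]
  linear_combination sub_conj w₁ - I * sub_conj w₂ - ((2 * w₂.im : ℝ) : ℂ) * I_sq

theorem Complex.eq_and_eq_of_add_I_mul_eq_of_sub_I_mul_eq {a b c d : ℂ}
    (hadd : a + I * b = c + I * d) (hsub : a - I * b = c - I * d) : a = c ∧ b = d := by
  refine ⟨by linear_combination (hadd + hsub) / 2, mul_left_cancel₀ I_ne_zero ?_⟩
  linear_combination (hadd - hsub) / 2

/-- Example 8.6: the finite holomorphic map G(z, w₁, w₂) = (z, w₁ + iw₂, (w₁ − iw₂)²)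
restricted to M = {Im w₁ = |z|²/2, Im w₂ = |z|⁴/2} satisfies the identity
w₁ − iw₂ = conj(w₁ + iw₂) + i|z|² + |z|⁴, maps M into M', and is injective on M. -/
theorem stmt12 (M M' : Set (ℂ × ℂ × ℂ)) (G : ℂ × ℂ × ℂ → ℂ × ℂ × ℂ)
    (hM : M = {p : ℂ × ℂ × ℂ |
      p.2.1.im = ‖p.1‖ ^ 2 / 2 ∧ p.2.2.im = ‖p.1‖ ^ 4 / 2})
    (hM' : M' = {q : ℂ × ℂ × ℂ |
      q.2.2 = (starRingEnd ℂ q.2.1 + I * ((‖q.1‖ ^ 2 : ℝ) : ℂ)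
        + ((‖q.1‖ ^ 4 : ℝ) : ℂ)) ^ 2})
    (hG : ∀ p : ℂ × ℂ × ℂ, G p = (p.1, p.2.1 + I * p.2.2, (p.2.1 - I * p.2.2) ^ 2)) :
    (∀ p ∈ M, p.2.1 - I * p.2.2 =
      starRingEnd ℂ (p.2.1 + I * p.2.2) + I * ((‖p.1‖ ^ 2 : ℝ) : ℂ)
        + ((‖p.1‖ ^ 4 : ℝ) : ℂ)) ∧
    (∀ p ∈ M, G p ∈ M') ∧
    (∀ p ∈ M, ∀ q ∈ M, G p = G q → p = q) := by
  subst hM hM'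
  have identity : ∀ p ∈ {p : ℂ × ℂ × ℂ | p.2.1.im = ‖p.1‖ ^ 2 / 2 ∧ p.2.2.im = ‖p.1‖ ^ 4 / 2},
      p.2.1 - I * p.2.2 = starRingEnd ℂ (p.2.1 + I * p.2.2) + I * ((‖p.1‖ ^ 2 : ℝ) : ℂ)
        + ((‖p.1‖ ^ 4 : ℝ) : ℂ) := by
    rintro ⟨z, w₁, w₂⟩ ⟨h₁, h₂⟩
    rw [sub_I_mul_eq_conj_add_I_mul, h₁, h₂]
    ring_nf
  refine ⟨identity, fun p hp => ?_, fun p hp q hq hpq => ?_⟩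
  · simp only [Set.mem_ofPred_eq, hG, identity p hp]
  · rw [hG p, hG q, Prod.mk.injEq, Prod.mk.injEq] at hpq
    obtain ⟨hz, hadd, -⟩ := hpq
    have hsub : p.2.1 - I * p.2.2 = q.2.1 - I * q.2.2 := by
      rw [identity p hp, identity q hq, hz, hadd]
    obtain ⟨hw₁, hw₂⟩ := eq_and_eq_of_add_I_mul_eq_of_sub_I_mul_eq hadd hsub
    exact Prod.ext hz (Prod.ext hw₁ hw₂)
end
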